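/- Let r, s ∈ ℤ_{≥0}, α_0 ∈ ℂ, λ, α_1 ∈ ℂ*, and let V be an infinite-dimensional irreducible L̄_r-module. Let W_s ⊆ ℂ[X_0,X_1] be the subspace spanned by { f(X_0)(X_0+X_1)^n : n ∈ ℤ_{≥0}, f ∈ ℂ[X_0], deg f ≤ s }, and let W'_s ⊆ ℂ[X_0,X_1] be the subspace spanned by { (X_0+X_1)^n f(X_1) : n ∈ ℤ_{≥0}, f ∈ ℂ[X_1], deg f ≤ s }. Then V ⊗ W_s and V ⊗ W'_s are submodules of M(V,Ω(λ,α_0)) ⊗ Ω(λ,α_1); that is, each of these subspaces of V ⊗ ℂ[X_0,X_1] is stable under all operators L_k, k ∈ ℤ. -/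

import Mathlib

open TensorProduct

/-- Substitution `X_i ↦ X_i - k` (in the variable `i` only) on `ℂ[X_0,…,X_{N-1}]`. -/
noncomputable def shiftVar {N : ℕ} (i : Fin N) (k : ℂ) :
    MvPolynomial (Fin N) ℂ →ₗ[ℂ] MvPolynomial (Fin N) ℂ :=
  (MvPolynomial.aeval fun j =>
    MvPolynomial.X j - if j = i then MvPolynomial.C k else 0).toLinearMap

/-- The operator `L_k` on `⊗_i Ω(λ_i,α_i) = ℂ[X_0,…,X_{N-1}]`. -/
noncomputable def omegaOp {N : ℕ} (lam al : Fin N → ℂ) (k : ℤ) :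
    MvPolynomial (Fin N) ℂ →ₗ[ℂ] MvPolynomial (Fin N) ℂ :=
  ∑ i : Fin N, (lam i ^ k) •
    ((LinearMap.mulLeft ℂ (MvPolynomial.X i - MvPolynomial.C ((k : ℂ) * al i))).comp
      (shiftVar i (k : ℂ)))

/-- The operator `L_k` on `M(V,Ω(λ_0,α_0)) ⊗ ⊗_{i=1}^m Ω(λ_i,α_i) = V ⊗ ℂ[X_0,…,X_m]`. -/
noncomputable def MOp {V : Type*} [AddCommGroup V] [Module ℂ V]
    (B : ℕ → V →ₗ[ℂ] V) (r : ℕ) {m : ℕ} (lam al : Fin (m + 1) → ℂ) (k : ℤ) :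
    V ⊗[ℂ] MvPolynomial (Fin (m + 1)) ℂ →ₗ[ℂ] V ⊗[ℂ] MvPolynomial (Fin (m + 1)) ℂ :=
  TensorProduct.map LinearMap.id (omegaOp lam al k) +
  ∑ j ∈ Finset.range (r + 1),
    (((k : ℂ) ^ (j + 1)) / ((j + 1).factorial : ℂ)) •
      TensorProduct.map (B j) ((lam 0 ^ k) • shiftVar 0 (k : ℂ))

/-- The subspace `W_s ⊆ ℂ[X_0,X_1]` spanned by
`{ f(X_0)(X_0+X_1)^n : n ∈ ℤ_{≥0}, deg f ≤ s }`. -/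
noncomputable def Wsub (s : ℕ) : Submodule ℂ (MvPolynomial (Fin 2) ℂ) :=
  Submodule.span ℂ {p | ∃ (n : ℕ) (f : Polynomial ℂ), f.natDegree ≤ s ∧
    p = (Polynomial.aeval (MvPolynomial.X 0 : MvPolynomial (Fin 2) ℂ) f) *
        (MvPolynomial.X 0 + MvPolynomial.X 1) ^ n}

/-- The subspace `W'_s ⊆ ℂ[X_0,X_1]` spanned by
`{ (X_0+X_1)^n f(X_1) : n ∈ ℤ_{≥0}, deg f ≤ s }`. -/
noncomputable def Wsub' (s : ℕ) : Submodule ℂ (MvPolynomial (Fin 2) ℂ) :=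
  Submodule.span ℂ {p | ∃ (n : ℕ) (f : Polynomial ℂ), f.natDegree ≤ s ∧
    p = (MvPolynomial.X 0 + MvPolynomial.X 1) ^ n *
        (Polynomial.aeval (MvPolynomial.X 1 : MvPolynomial (Fin 2) ℂ) f)}

/-- The subspace `V ⊗ Q` of `V ⊗ ℂ[X_0,X_1]` for a subspace `Q ⊆ ℂ[X_0,X_1]`. -/
noncomputable def tsub (V : Type*) [AddCommGroup V] [Module ℂ V]
    (Q : Submodule ℂ (MvPolynomial (Fin 2) ℂ)) :
    Submodule ℂ (V ⊗[ℂ] MvPolynomial (Fin 2) ℂ) :=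
  Submodule.span ℂ {x | ∃ (v : V) (w : MvPolynomial (Fin 2) ℂ), w ∈ Q ∧ x = v ⊗ₜ[ℂ] w}

/-!
Write `u = X₀ + X₁`. Both shifts `X_j ↦ X_j - k` send `u` to `u - k`, so the spans of the
products `f(X_i) g(u)` with `deg f ≤ s` are stable under them; the `V`-part of `L_k` only
involves such a shift. In the `Ω`-part, writing `X_{1-i} = u - X_i`, the two summands combine to
`[(X_i - kα_i) f(X_i - k) - (X_i + kα_{1-i}) f(X_i)] g(u - k) + f(X_i) · u g(u - k)`, and the
leading terms of `f(X_i - k)` and `f(X_i)` cancel, so the bracket still has degree `≤ deg f`.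
-/

open Polynomial

namespace Polynomial
variable {R : Type*} [CommRing R]

theorem natDegree_X_mul_taylor_sub_le [Nontrivial R] (r : R) (f : R[X]) :
    (X * (taylor r f - f)).natDegree ≤ f.natDegree := by
  rcases eq_or_ne (taylor r f - f) 0 with hd | hd
  · simp [hd]
  have hf : f ≠ 0 := by rintro rfl; simp at hd
  rw [natDegree_X_mul hd]
  refine natDegree_lt_natDegree hd ?_
  simpa only [degree_taylor] using degree_sub_lt_left (degree_taylor f r)
    ((taylor_eq_zero r f).not.mpr hf) (leadingCoeff_taylor r f)

theorem natDegree_X_sub_C_mul_taylor_sub_le [Nontrivial R] (r a b : R) (f : R[X]) :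
    ((X - C a) * taylor r f - (X + C b) * f).natDegree ≤ f.natDegree := by
  have hsplit : (X - C a) * taylor r f - (X + C b) * f
      = X * (taylor r f - f) - (C a * taylor r f + C b * f) := by ring
  rw [hsplit]
  refine (natDegree_sub_le_of_le (natDegree_X_mul_taylor_sub_le r f)
    (natDegree_add_le_of_degree_le ((natDegree_C_mul_le _ _).trans (natDegree_taylor f r).le)
      (natDegree_C_mul_le _ _))).trans (max_self _).le

theorem aeval_sub_algebraMap {A : Type*} [CommRing A] [Algebra R A] (x : A) (r : R) (f : R[X]) :
    aeval (x - algebraMap R A r) f = aeval x (taylor (-r) f) := by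
  rw [taylor_apply, aeval_comp]
  simp [sub_eq_add_neg]

end Polynomial

theorem Submodule.span_mul_pow_eq_span_mul_aeval {R A : Type*} [CommSemiring R] [CommSemiring A]
    [Algebra R A] (P : R[X] → Prop) (x y : A) :
    Submodule.span R {p | ∃ (n : ℕ) (f : R[X]), P f ∧ p = aeval x f * y ^ n}
      = Submodule.span R {p | ∃ f, P f ∧ ∃ g : R[X], p = aeval x f * aeval y g} := by
  apply le_antisymm
  · refine Submodule.span_mono ?_
    rintro _ ⟨n, f, hf, rfl⟩
    exact ⟨f, hf, X ^ n, by simp⟩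
  · refine Submodule.span_le.mpr ?_
    rintro _ ⟨f, hf, g, rfl⟩
    rw [aeval_eq_sum_range (x := y), Finset.mul_sum]
    refine Submodule.sum_mem _ fun n _ => ?_
    rw [mul_smul_comm]
    exact Submodule.smul_mem _ _ (Submodule.subset_span ⟨n, f, hf, rfl⟩)

namespace MvPolynomial
variable {N : ℕ}

theorem shiftVar_X (j i : Fin N) (k : ℂ) :
    shiftVar j k (X i) = X i - if i = j then C k else 0 := by
  simp [shiftVar]

theorem shiftVar_mul (j : Fin N) (k : ℂ) (p q : MvPolynomial (Fin N) ℂ) :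
    shiftVar j k (p * q) = shiftVar j k p * shiftVar j k q := by
  simp [shiftVar]

theorem shiftVar_aeval (j : Fin N) (k : ℂ) (p : MvPolynomial (Fin N) ℂ) (f : ℂ[X]) :
    shiftVar j k (Polynomial.aeval p f) = Polynomial.aeval (shiftVar j k p) f :=
  (Polynomial.aeval_algHom_apply (MvPolynomial.aeval _) p f).symm

theorem shiftVar_aeval_X_self (j : Fin N) (k : ℂ) (f : ℂ[X]) :
    shiftVar j k (Polynomial.aeval (X j) f) = Polynomial.aeval (X j) (taylor (-k) f) := by
  rw [shiftVar_aeval, shiftVar_X, if_pos rfl, ← aeval_sub_algebraMap, algebraMap_eq]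

theorem shiftVar_aeval_X_of_ne {j i : Fin N} (h : i ≠ j) (k : ℂ) (f : ℂ[X]) :
    shiftVar j k (Polynomial.aeval (X i) f) = Polynomial.aeval (X i) f := by
  rw [shiftVar_aeval, shiftVar_X, if_neg h, sub_zero]

theorem shiftVar_X_zero_add_X_one (j : Fin 2) (k : ℂ) :
    shiftVar j k (X 0 + X 1) = X 0 + X 1 - C k := by
  fin_cases j <;> simp [shiftVar_X] <;> ring

theorem shiftVar_aeval_X_zero_add_X_one (j : Fin 2) (k : ℂ) (g : ℂ[X]) :
    shiftVar j k (Polynomial.aeval (X 0 + X 1) g)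
      = Polynomial.aeval (X 0 + X 1) (taylor (-k) g) := by
  rw [shiftVar_aeval, shiftVar_X_zero_add_X_one, ← aeval_sub_algebraMap, algebraMap_eq]

end MvPolynomial

open MvPolynomial in
noncomputable def Wspan (i : Fin 2) (s : ℕ) : Submodule ℂ (MvPolynomial (Fin 2) ℂ) :=
  Submodule.span ℂ {p | ∃ f : ℂ[X], f.natDegree ≤ s ∧
    ∃ g : ℂ[X], p = Polynomial.aeval (X i) f * Polynomial.aeval (X 0 + X 1) g}

theorem Wsub_eq_Wspan (s : ℕ) : Wsub s = Wspan 0 s :=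
  Submodule.span_mul_pow_eq_span_mul_aeval (fun f => f.natDegree ≤ s) _ _

theorem Wsub'_eq_Wspan (s : ℕ) : Wsub' s = Wspan 1 s := by
  rw [Wspan, ← Submodule.span_mul_pow_eq_span_mul_aeval, Wsub']
  simp_rw [mul_comm ((MvPolynomial.X 0 + MvPolynomial.X 1 : MvPolynomial (Fin 2) ℂ) ^ _)]

namespace Wspan
open MvPolynomial

theorem aeval_mul_aeval_mem {i : Fin 2} {s : ℕ} {f : ℂ[X]} (hf : f.natDegree ≤ s) (g : ℂ[X]) :
    Polynomial.aeval (X i) f * Polynomial.aeval (X 0 + X 1) g ∈ Wspan i s :=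
  Submodule.subset_span ⟨f, hf, g, rfl⟩

theorem le_comap_shiftVar (i j : Fin 2) (s : ℕ) (k : ℂ) :
    Wspan i s ≤ (Wspan i s).comap (shiftVar j k) := by
  refine Submodule.span_le.mpr ?_
  rintro _ ⟨f, hf, g, rfl⟩
  rw [SetLike.mem_coe, Submodule.mem_comap, shiftVar_mul, shiftVar_aeval_X_zero_add_X_one]
  rcases eq_or_ne i j with rfl | hij
  · rw [shiftVar_aeval_X_self]
    exact aeval_mul_aeval_mem (by rwa [natDegree_taylor]) _
  · rw [shiftVar_aeval_X_of_ne hij]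
    exact aeval_mul_aeval_mem hf _

theorem omegaOp_aeval_mul_aeval (lam : ℂ) (al : Fin 2 → ℂ) (k : ℤ) (i : Fin 2) (f g : ℂ[X]) :
    omegaOp (fun _ => lam) al k (Polynomial.aeval (X i) f * Polynomial.aeval (X 0 + X 1) g)
      = lam ^ k • (Polynomial.aeval (X i)
            ((Polynomial.X - Polynomial.C ((k : ℂ) * al i)) * taylor (-(k : ℂ)) f
              - (Polynomial.X + Polynomial.C ((k : ℂ) * al i.rev)) * f)
          * Polynomial.aeval (X 0 + X 1) (taylor (-(k : ℂ)) g)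
        + Polynomial.aeval (X i) f
          * Polynomial.aeval (X 0 + X 1) (Polynomial.X * taylor (-(k : ℂ)) g)) := by
  have hsum : ∀ F : Fin 2 → MvPolynomial (Fin 2) ℂ, ∑ j, F j = F i + F i.rev := by
    intro F; fin_cases i <;> simp [Fin.sum_univ_two, add_comm]
  have hrev : i ≠ i.rev := by fin_cases i <;> decide
  rw [omegaOp, LinearMap.sum_apply, hsum]
  simp only [LinearMap.smul_apply, LinearMap.comp_apply, LinearMap.mulLeft_apply, shiftVar_mul,
    shiftVar_aeval_X_zero_add_X_one, shiftVar_aeval_X_self, shiftVar_aeval_X_of_ne hrev,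
    ← smul_add]
  rw [← Fin.sum_univ_two (f := X), hsum]
  simp only [map_sub, map_add, map_mul, Polynomial.aeval_X, Polynomial.aeval_C,
    MvPolynomial.algebraMap_eq]
  congr 1
  ring

theorem le_comap_omegaOp (i : Fin 2) (s : ℕ) (lam : ℂ) (al : Fin 2 → ℂ) (k : ℤ) :
    Wspan i s ≤ (Wspan i s).comap (omegaOp (fun _ => lam) al k) := by
  refine Submodule.span_le.mpr ?_
  rintro _ ⟨f, hf, g, rfl⟩
  rw [SetLike.mem_coe, Submodule.mem_comap, omegaOp_aeval_mul_aeval]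
  exact Submodule.smul_mem _ _ <| add_mem
    (aeval_mul_aeval_mem ((natDegree_X_sub_C_mul_taylor_sub_le _ _ _ f).trans hf) _)
    (aeval_mul_aeval_mem hf _)

end Wspan

section tsub
variable {V : Type*} [AddCommGroup V] [Module ℂ V] {Q : Submodule ℂ (MvPolynomial (Fin 2) ℂ)}

theorem tsub_le_comap_map (g : V →ₗ[ℂ] V) {f : MvPolynomial (Fin 2) ℂ →ₗ[ℂ] MvPolynomial (Fin 2) ℂ}
    (hf : Q ≤ Q.comap f) : tsub V Q ≤ (tsub V Q).comap (TensorProduct.map g f) := by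
  refine Submodule.span_le.mpr ?_
  rintro _ ⟨v, w, hw, rfl⟩
  exact Submodule.subset_span ⟨g v, f w, hf hw, TensorProduct.map_tmul g f v w⟩

theorem tsub_le_comap_MOp (B : ℕ → V →ₗ[ℂ] V) (r : ℕ) (lam al : Fin 2 → ℂ) (k : ℤ)
    (hω : Q ≤ Q.comap (omegaOp lam al k)) (hshift : Q ≤ Q.comap (shiftVar 0 (k : ℂ))) :
    tsub V Q ≤ (tsub V Q).comap (MOp B r lam al k) := by
  have hshift' : Q ≤ Q.comap (lam 0 ^ k • shiftVar 0 (k : ℂ)) :=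
    fun w hw => Q.smul_mem _ (hshift hw)
  intro x hx
  rw [Submodule.mem_comap, MOp, LinearMap.add_apply]
  refine add_mem (tsub_le_comap_map LinearMap.id hω hx) ?_
  rw [LinearMap.sum_apply]
  exact Submodule.sum_mem _ fun j _ =>
    Submodule.smul_mem _ _ (tsub_le_comap_map (B j) hshift' hx)

end tsub

theorem statement4_general {V : Type*} [AddCommGroup V] [Module ℂ V]
    (r s : ℕ) (al0 : ℂ) (lam al1 : ℂ)
    (B : ℕ → V →ₗ[ℂ] V) :
    (∀ k : ℤ, ∀ x ∈ tsub V (Wsub s),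
        MOp B r (fun _ => lam) ![al0, al1] k x ∈ tsub V (Wsub s)) ∧
    (∀ k : ℤ, ∀ x ∈ tsub V (Wsub' s),
        MOp B r (fun _ => lam) ![al0, al1] k x ∈ tsub V (Wsub' s)) := by
  rw [Wsub_eq_Wspan, Wsub'_eq_Wspan]
  exact ⟨fun k => tsub_le_comap_MOp B r _ _ k (Wspan.le_comap_omegaOp 0 s lam _ k)
      (Wspan.le_comap_shiftVar 0 0 s k),
    fun k => tsub_le_comap_MOp B r _ _ k (Wspan.le_comap_omegaOp 1 s lam _ k)
      (Wspan.le_comap_shiftVar 1 0 s k)⟩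

/-- **Lemma 3.3.** Let `r, s ∈ ℤ_{≥0}`, `α_0 ∈ ℂ`, `λ, α_1 ∈ ℂ*`, and `V` an
infinite-dimensional irreducible `L̄_r`-module. Then `V ⊗ W_s` and `V ⊗ W'_s` are
submodules of `M(V,Ω(λ,α_0)) ⊗ Ω(λ,α_1)`, i.e. stable under all `L_k`. -/
theorem statement4 {V : Type*} [AddCommGroup V] [Module ℂ V]
    (r s : ℕ) (al0 : ℂ) (lam al1 : ℂ) (hlam : lam ≠ 0) (hal1 : al1 ≠ 0)
    (B : ℕ → V →ₗ[ℂ] V)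
    (hBtop : ∀ i, r < i → B i = 0)
    (hBrel : ∀ i j, i ≤ r → j ≤ r →
      B i ∘ₗ B j - B j ∘ₗ B i = (((j : ℂ) - (i : ℂ)) • B (i + j) : V →ₗ[ℂ] V))
    (hVirr : ∀ U : Submodule ℂ V, (∀ i, i ≤ r → ∀ w ∈ U, B i w ∈ U) → U = ⊥ ∨ U = ⊤)
    (hVinf : ¬ Module.Finite ℂ V) :
    (∀ k : ℤ, ∀ x ∈ tsub V (Wsub s),
        MOp B r (fun _ => lam) ![al0, al1] k x ∈ tsub V (Wsub s)) ∧
    (∀ k : ℤ, ∀ x ∈ tsub V (Wsub' s),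
        MOp B r (fun _ => lam) ![al0, al1] k x ∈ tsub V (Wsub' s)) :=
  statement4_general r s al0 lam al1 B
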